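/- (Second identity of Lemma 3 of the paper, with the proportionality constant made explicit.) Let g ≥ 1, let p be an odd positive integer, let ν ≥ 1 be an integer, and let ε ∈ {0,1}^g ⊂ ℤ^g. Then for every Ω ∈ 𝔥_g: ∑_{u ∈ {0,…,2^ν p −1}^g} (−1)^{ε·u} · θ_{2^ν p}[0, u](0, (1/(2^ν p))Ω) = (2^ν p)^g · θ_2[ε,0](0, 2^ν p · Ω). -/

import Mathlib

open scoped BigOperators

/-- The `n`-th term of the series defining the theta function with rational
characteristics `θ_l[ε₁,ε₂](z,Ω)` (equation (1) of the paper). -/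
noncomputable def thetaTerm (g l : ℕ) (ε₁ ε₂ : Fin g → ℤ) (z : Fin g → ℂ)
    (Ω : Matrix (Fin g) (Fin g) ℂ) (n : Fin g → ℤ) : ℂ :=
  Complex.exp (↑Real.pi * Complex.I *
      (∑ i, ∑ j, ((n i : ℂ) + (ε₁ i : ℂ) / (l : ℂ)) * Ω i j *
        ((n j : ℂ) + (ε₁ j : ℂ) / (l : ℂ)))
    + 2 * ↑Real.pi * Complex.I *
      (∑ i, ((n i : ℂ) + (ε₁ i : ℂ) / (l : ℂ)) * (z i + (ε₂ i : ℂ) / (l : ℂ))))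

/-- The theta function with rational characteristics `θ_l[ε₁,ε₂](z,Ω)`. -/
noncomputable def thetaChar (g l : ℕ) (ε₁ ε₂ : Fin g → ℤ) (z : Fin g → ℂ)
    (Ω : Matrix (Fin g) (Fin g) ℂ) : ℂ :=
  ∑' n : Fin g → ℤ, thetaTerm g l ε₁ ε₂ z Ω n

/-- `Ω` belongs to the Siegel upper half space `𝔥_g`: it is symmetric and its
imaginary part is positive definite. -/
def IsSiegel {g : ℕ} (Ω : Matrix (Fin g) (Fin g) ℂ) : Prop :=
  Ω.IsSymm ∧ (Matrix.of fun i j => (Ω i j).im).PosDef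

section Aux

open Finset Matrix

private lemma posdef_lower (g : ℕ) (hg : 1 ≤ g) (Y : Matrix (Fin g) (Fin g) ℝ)
    (hY : Y.PosDef) :
    ∃ c > 0, ∀ x : Fin g → ℝ, c * (∑ i, x i ^ 2) ≤ ∑ i, ∑ j, x i * Y i j * x j := by
  classical
  set F : (Fin g → ℝ) → ℝ := fun x => ∑ i, ∑ j, x i * Y i j * x j with hF
  have hFq : ∀ x, F x = dotProduct x (Y.mulVec x) := by
    intro x
    simp [hF, dotProduct, Matrix.mulVec, Finset.mul_sum, mul_assoc]
  have hFcont : Continuous F := by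
    apply continuous_finset_sum; intro i _
    apply continuous_finset_sum; intro j _
    exact ((continuous_apply i).mul continuous_const).mul (continuous_apply j)
  have hsph : (Metric.sphere (0 : Fin g → ℝ) 1).Nonempty := by
    haveI : Nonempty (Fin g) := ⟨⟨0, hg⟩⟩
    refine ⟨(fun _ => 1 : Fin g → ℝ), ?_⟩
    simp [Metric.mem_sphere, dist_zero_right, pi_norm_const]
  obtain ⟨a, ha, hmin⟩ := (isCompact_sphere (0 : Fin g → ℝ) 1).exists_isMinOn hsph
    hFcont.continuousOn
  have ha1 : ‖a‖ = 1 := by simpa [dist_zero_right] using ha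
  have ha0 : a ≠ 0 := by intro h; rw [h] at ha1; simp at ha1
  have hc0 : 0 < F a := by
    rw [hFq]
    have := hY.dotProduct_mulVec_pos ha0
    simpa using this
  have hscale : ∀ (t : ℝ) (x : Fin g → ℝ), F (t • x) = t ^ 2 * F x := by
    intro t x
    simp only [hF, Pi.smul_apply, smul_eq_mul, Finset.mul_sum]
    refine Finset.sum_congr rfl fun i _ => Finset.sum_congr rfl fun j _ => by ring
  have key : ∀ x : Fin g → ℝ, x ≠ 0 → F a * ‖x‖ ^ 2 ≤ F x := by
    intro x hx
    have hr : (0:ℝ) < ‖x‖ := norm_pos_iff.2 hx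
    set y : Fin g → ℝ := ‖x‖⁻¹ • x with hy
    have hy1 : ‖y‖ = 1 := by
      rw [hy, norm_smul, norm_inv, norm_norm, inv_mul_cancel₀ hr.ne']
    have hmem : y ∈ Metric.sphere (0 : Fin g → ℝ) 1 := by
      simp [Metric.mem_sphere, dist_zero_right, hy1]
    have h2 : F x = ‖x‖ ^ 2 * F y := by
      have : x = ‖x‖ • y := by rw [hy, smul_smul, mul_inv_cancel₀ hr.ne', one_smul]
      conv_lhs => rw [this]
      rw [hscale]
    have h1 : F a ≤ F y := hmin hmem
    rw [h2]
    nlinarith [h1, sq_nonneg ‖x‖]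
  refine ⟨F a / g, div_pos hc0 (by exact_mod_cast hg), ?_⟩
  intro x
  by_cases hx : x = 0
  · simp [hx, hF]
  · have hsum : (∑ i, x i ^ 2) ≤ (g : ℝ) * ‖x‖ ^ 2 := by
      calc (∑ i, x i ^ 2) ≤ ∑ _i : Fin g, ‖x‖ ^ 2 := by
            refine Finset.sum_le_sum fun i _ => ?_
            have := norm_le_pi_norm x i
            calc x i ^ 2 = ‖x i‖ ^ 2 := by rw [Real.norm_eq_abs, sq_abs]
              _ ≤ ‖x‖ ^ 2 := by nlinarith [norm_nonneg (x i)]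
        _ = (g : ℝ) * ‖x‖ ^ 2 := by simp [Finset.sum_const, nsmul_eq_mul]
    have hg' : (0:ℝ) < g := by exact_mod_cast hg
    have := key x hx
    calc F a / g * (∑ i, x i ^ 2) ≤ F a / g * ((g:ℝ) * ‖x‖ ^ 2) := by
          apply mul_le_mul_of_nonneg_left hsum (le_of_lt (div_pos hc0 hg'))
      _ = F a * ‖x‖ ^ 2 := by field_simp
      _ ≤ F x := this

private lemma summable_exp_int (a : ℝ) (ha : 0 < a) :
    Summable fun n : ℤ => Real.exp (-a * (n : ℝ) ^ 2) := by
  apply Summable.of_nat_of_neg <;>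
  · simp only [Int.cast_natCast, Int.cast_neg, neg_sq]
    refine Summable.of_nonneg_of_le (fun n => (Real.exp_pos _).le) (fun n => ?_)
      (summable_geometric_of_lt_one (Real.exp_pos (-a)).le
        (Real.exp_lt_one_iff.2 (by linarith)))
    rw [← Real.exp_nat_mul]
    apply Real.exp_le_exp.2
    have : (n : ℝ) ≤ (n : ℝ) ^ 2 := by
      rcases Nat.eq_zero_or_pos n with h | h
      · simp [h]
      · have h1 : (1:ℝ) ≤ n := by exact_mod_cast h
        nlinarith
    nlinarith

private lemma summable_exp_lattice (g : ℕ) (a : ℝ) (ha : 0 < a) :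
    Summable fun n : Fin g → ℤ => Real.exp (-a * ∑ i, (n i : ℝ) ^ 2) := by
  induction g with
  | zero => exact Summable.of_finite
  | succ m ih =>
    rw [← (Fin.consEquiv (fun _ : Fin (m+1) => ℤ)).summable_iff]
    have : ∀ q : ℤ × (Fin m → ℤ),
        Real.exp (-a * ∑ i, (((Fin.consEquiv (fun _ : Fin (m+1) => ℤ)) ⟨q.1, q.2⟩) i : ℝ) ^ 2)
          = Real.exp (-a * (q.1 : ℝ) ^ 2) * Real.exp (-a * ∑ i, (q.2 i : ℝ) ^ 2) := by
      intro q
      rw [← Real.exp_add]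
      congr 1
      rw [Fin.sum_univ_succ]
      simp [Fin.consEquiv, mul_add]
    have hs : Summable fun q : ℤ × (Fin m → ℤ) =>
        Real.exp (-a * (q.1 : ℝ) ^ 2) * Real.exp (-a * ∑ i, (q.2 i : ℝ) ^ 2) :=
      (summable_exp_int a ha).mul_of_nonneg ih (fun n => (Real.exp_pos _).le)
        (fun n => (Real.exp_pos _).le)
    exact hs.congr fun q => (this q).symm

private lemma norm_thetaTerm (g L : ℕ) (u : Fin g → ℤ)
    (Ω : Matrix (Fin g) (Fin g) ℂ) (n : Fin g → ℤ) :
    ‖thetaTerm g L 0 u 0 ((1 / (L:ℂ)) • Ω) n‖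
      = Real.exp (-(Real.pi / L) * ∑ i, ∑ j, (n i : ℝ) * (Ω i j).im * (n j : ℝ)) := by
  rw [thetaTerm, Complex.norm_exp]
  congr 1
  have hS : (∑ i, ∑ j, ((n i : ℂ) + ((0 : Fin g → ℤ) i : ℂ) / (L : ℂ)) * ((1 / (L:ℂ)) • Ω) i j *
        ((n j : ℂ) + ((0 : Fin g → ℤ) j : ℂ) / (L : ℂ))).im
      = (1 / L) * ∑ i, ∑ j, (n i : ℝ) * (Ω i j).im * (n j : ℝ) := by
    rw [Complex.im_sum, Finset.mul_sum]
    refine Finset.sum_congr rfl fun i _ => ?_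
    rw [Complex.im_sum, Finset.mul_sum]
    refine Finset.sum_congr rfl fun j _ => ?_
    have : ((n i : ℂ) + ((0 : Fin g → ℤ) i : ℂ) / (L : ℂ)) * ((1 / (L:ℂ)) • Ω) i j *
        ((n j : ℂ) + ((0 : Fin g → ℤ) j : ℂ) / (L : ℂ))
        = (((n i : ℝ) * (n j : ℝ) / L : ℝ) : ℂ) * Ω i j := by
      simp only [Pi.zero_apply, Int.cast_zero, zero_div, add_zero, Matrix.smul_apply,
        smul_eq_mul]
      push_cast
      ring
    rw [this, Complex.im_ofReal_mul]
    ring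
  have hT : (∑ i, ((n i : ℂ) + ((0 : Fin g → ℤ) i : ℂ) / (L : ℂ)) *
        ((0 : Fin g → ℂ) i + (u i : ℂ) / (L : ℂ))).im = 0 := by
    rw [Complex.im_sum]
    refine Finset.sum_eq_zero fun i _ => ?_
    have : ((n i : ℂ) + ((0 : Fin g → ℤ) i : ℂ) / (L : ℂ)) *
        ((0 : Fin g → ℂ) i + (u i : ℂ) / (L : ℂ))
        = (((n i : ℝ) * (u i : ℝ) / L : ℝ) : ℂ) := by
      simp only [Pi.zero_apply, Int.cast_zero, zero_div, add_zero, zero_add]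
      push_cast
      ring
    rw [this, Complex.ofReal_im]
  rw [Complex.add_re, Complex.mul_re, Complex.mul_re]
  simp only [Complex.mul_re, Complex.mul_im, Complex.I_re, Complex.I_im, Complex.ofReal_re,
    Complex.ofReal_im, Complex.re_ofNat, Complex.im_ofNat, hS, hT]
  ring

private lemma summable_thetaTerm (g : ℕ) (hg : 1 ≤ g) (L : ℕ) (hL : 0 < L) (u : Fin g → ℤ)
    (Ω : Matrix (Fin g) (Fin g) ℂ) (hΩ : IsSiegel Ω) :
    Summable (thetaTerm g L 0 u 0 ((1 / (L:ℂ)) • Ω)) := by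
  obtain ⟨c, hc, hlow⟩ := posdef_lower g hg _ hΩ.2
  have hL' : (0:ℝ) < L := by exact_mod_cast hL
  have hpos : 0 < Real.pi / L * c := by positivity
  rw [← summable_norm_iff]
  refine Summable.of_nonneg_of_le (fun n => norm_nonneg _) (fun n => ?_)
    (summable_exp_lattice g (Real.pi / L * c) hpos)
  rw [norm_thetaTerm g L u Ω n]
  apply Real.exp_le_exp.2
  have h1 := hlow (fun i => (n i : ℝ))
  simp only [Matrix.of_apply] at h1
  have hπ : 0 < Real.pi / L := by positivity
  nlinarith [h1]

private lemma root_sum (L : ℕ) (hL : 0 < L) (k : ℤ) :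
    ∑ v : Fin L, Complex.exp (2 * Real.pi * Complex.I * k / L) ^ (v : ℕ)
      = if (L:ℤ) ∣ k then (L:ℂ) else 0 := by
  have hLC : (L:ℂ) ≠ 0 := Nat.cast_ne_zero.2 hL.ne'
  set ζ : ℂ := Complex.exp (2 * Real.pi * Complex.I * k / L) with hζ
  have hζL : ζ ^ L = 1 := by
    rw [hζ, ← Complex.exp_nat_mul]
    have : (L:ℂ) * (2 * Real.pi * Complex.I * k / L) = k * (2 * Real.pi * Complex.I) := by
      field_simp
    rw [this, Complex.exp_int_mul_two_pi_mul_I]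
  by_cases hdvd : (L:ℤ) ∣ k
  · obtain ⟨m, rfl⟩ := hdvd
    have : ζ = 1 := by
      rw [hζ]
      have : (2 * Real.pi * Complex.I * ((L:ℤ) * m : ℤ) / L : ℂ)
          = (m:ℂ) * (2 * Real.pi * Complex.I) := by
        push_cast; field_simp
      rw [this, Complex.exp_int_mul_two_pi_mul_I]
    simp [this, dvd_mul_right, Finset.card_univ]
  · have hζ1 : ζ ≠ 1 := by
      intro h
      rw [hζ, Complex.exp_eq_one_iff] at h
      obtain ⟨m, hm⟩ := h
      apply hdvd
      refine ⟨m, ?_⟩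
      have h2 : (2 * Real.pi * Complex.I : ℂ) ≠ 0 := by
        simp [Real.pi_ne_zero, Complex.I_ne_zero]
      rw [div_eq_iff hLC] at hm
      have h3 : (2 * Real.pi * Complex.I : ℂ) * (k:ℂ)
          = (2 * Real.pi * Complex.I : ℂ) * ((L:ℂ) * m) := by linear_combination hm
      have : (k : ℂ) = (L : ℂ) * m := mul_left_cancel₀ h2 h3
      exact_mod_cast this
    rw [Fin.sum_univ_eq_sum_range (fun v => ζ ^ v) L, geom_sum_eq hζ1, hζL]
    simp [hdvd]

private lemma pointwise (g L h : ℕ) (hL : 0 < L) (hLh : L = 2 * h) (ε : Fin g → ℤ)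
    (Ω' : Matrix (Fin g) (Fin g) ℂ) (n : Fin g → ℤ) :
    ∑ u : Fin g → Fin L, (-1:ℂ) ^ (∑ i, ε i * ((u i : ℕ) : ℤ)) *
        thetaTerm g L 0 (fun i => ((u i : ℕ) : ℤ)) 0 Ω' n
    = (if ∀ i, (L:ℤ) ∣ (n i + h * ε i) then ((L:ℂ) ^ g) else 0) *
        thetaTerm g L 0 0 0 Ω' n := by
  classical
  have hLC : (L:ℂ) ≠ 0 := Nat.cast_ne_zero.2 hL.ne'
  have hhC : (L:ℂ) = 2 * h := by rw [hLh]; push_cast; ring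
  set ζ : Fin g → ℂ := fun i => Complex.exp (2 * Real.pi * Complex.I * (n i + h * ε i) / L)
    with hζ
  have step1 : ∀ u : Fin g → Fin L,
      (-1:ℂ) ^ (∑ i, ε i * ((u i : ℕ) : ℤ)) *
        thetaTerm g L 0 (fun i => ((u i : ℕ) : ℤ)) 0 Ω' n
      = thetaTerm g L 0 0 0 Ω' n * ∏ i, ζ i ^ ((u i : ℕ)) := by
    intro u
    have hneg : (-1:ℂ) ^ (∑ i, ε i * ((u i : ℕ) : ℤ))
        = Complex.exp ((∑ i, ε i * ((u i : ℕ) : ℤ)) * (Real.pi * Complex.I)) := by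
      rw [Complex.exp_int_mul, Complex.exp_pi_mul_I]
    have hprod : ∏ i, ζ i ^ ((u i : ℕ))
        = Complex.exp (∑ i, ((u i : ℕ) : ℂ) *
            (2 * Real.pi * Complex.I * (n i + h * ε i) / L)) := by
      rw [Complex.exp_sum]
      refine Finset.prod_congr rfl fun i _ => ?_
      rw [hζ, ← Complex.exp_nat_mul]
    rw [hneg, hprod, thetaTerm, thetaTerm, ← Complex.exp_add, ← Complex.exp_add]
    congr 1
    simp only [Pi.zero_apply, Int.cast_zero, zero_div, add_zero, zero_add, mul_zero,
      Finset.sum_const_zero]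
    have hkey : ((∑ i, ε i * ((u i : ℕ) : ℤ) : ℤ) : ℂ) * (↑Real.pi * Complex.I)
        + 2 * ↑Real.pi * Complex.I * (∑ x, (n x : ℂ) * (((u x : ℕ) : ℂ) / (L : ℂ)))
        = ∑ i, ((u i : ℕ) : ℂ) *
            (2 * ↑Real.pi * Complex.I * ((n i : ℂ) + (h : ℂ) * (ε i : ℂ)) / (L : ℂ)) := by
      push_cast
      rw [Finset.sum_mul, Finset.mul_sum, ← Finset.sum_add_distrib]
      refine Finset.sum_congr rfl fun i _ => ?_
      field_simp
      rw [hhC]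
      ring
    linear_combination hkey
  rw [Finset.sum_congr rfl fun u _ => step1 u, ← Finset.mul_sum, mul_comm]
  congr 1
  rw [show (∑ u : Fin g → Fin L, ∏ i, ζ i ^ ((u i : ℕ))) = ∏ i, ∑ v : Fin L, ζ i ^ (v : ℕ) from
    (Fintype.prod_sum (fun i (v : Fin L) => ζ i ^ (v : ℕ))).symm]
  have : ∀ i, (∑ v : Fin L, ζ i ^ (v : ℕ)) = if (L:ℤ) ∣ (n i + h * ε i) then (L:ℂ) else 0 := by
    intro i
    have hr := root_sum L hL (n i + h * ε i)
    rw [hζ, ← hr]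
    congr 2
    push_cast
    ring
  rw [Finset.prod_congr rfl fun i _ => this i]
  by_cases hall : ∀ i, (L:ℤ) ∣ (n i + h * ε i)
  · rw [if_pos hall, Finset.prod_congr rfl fun i _ => if_pos (hall i)]
    simp
  · rw [if_neg hall]
    push_neg at hall
    obtain ⟨i, hi⟩ := hall
    exact Finset.prod_eq_zero (Finset.mem_univ i) (by rw [if_neg hi])

private lemma reindex (g L h : ℕ) (hL : 0 < L) (hLh : L = 2 * h) (ε : Fin g → ℤ)
    (Ω : Matrix (Fin g) (Fin g) ℂ) :
    (∑' n : Fin g → ℤ, ((if ∀ i, (L:ℤ) ∣ (n i + h * ε i) then ((L:ℂ) ^ g) else 0) *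
        thetaTerm g L 0 0 0 ((1/(L:ℂ)) • Ω) n))
    = ∑' m : Fin g → ℤ, (L:ℂ) ^ g * thetaTerm g 2 ε 0 0 ((L:ℂ) • Ω) m := by
  classical
  have hL0 : (L:ℤ) ≠ 0 := by exact_mod_cast hL.ne'
  have hLC : (L:ℂ) ≠ 0 := Nat.cast_ne_zero.2 hL.ne'
  have hhC : (L:ℂ) = 2 * h := by rw [hLh]; push_cast; ring
  set G : (Fin g → ℤ) → ℂ := fun m => (L:ℂ) ^ g * thetaTerm g 2 ε 0 0 ((L:ℂ) • Ω) m with hG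
  have hGne : ∀ m, G m ≠ 0 := fun m =>
    mul_ne_zero (pow_ne_zero _ hLC) (Complex.exp_ne_zero _)
  refine tsum_eq_tsum_of_ne_zero_bij
    (fun x => fun j => (L:ℤ) * x.1 j + h * ε j) ?_ ?_ ?_
  · intro x y hxy
    ext j
    have := congrFun hxy j
    simp only at this
    have : (L:ℤ) * x.1 j = (L:ℤ) * y.1 j := by omega
    exact mul_left_cancel₀ hL0 this
  · rintro n hn
    have hcond : ∀ i, (L:ℤ) ∣ (n i + h * ε i) := by
      by_contra hc
      apply hn
      simp only [Function.mem_support] at *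
      rw [if_neg hc, zero_mul]
    have hdvd : ∀ i, (L:ℤ) ∣ (n i - h * ε i) := by
      intro i
      have h1 := hcond i
      have : (n i - h * ε i) = (n i + h * ε i) - (L:ℤ) * ε i := by
        rw [hLh]; push_cast; ring
      rw [this]
      exact dvd_sub h1 ⟨ε i, rfl⟩
    refine ⟨⟨fun j => (n j - h * ε j) / L, Function.mem_support.2 (hGne _)⟩, ?_⟩
    funext j
    simp only
    rw [Int.mul_ediv_cancel' (hdvd j)]
    ring
  · rintro ⟨m, hm⟩
    simp only
    have hcond : ∀ i, (L:ℤ) ∣ (((L:ℤ) * m i + h * ε i) + h * ε i) := by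
      intro i
      have : ((L:ℤ) * m i + h * ε i) + h * ε i = (L:ℤ) * (m i + ε i) := by
        rw [hLh]; push_cast; ring
      exact ⟨m i + ε i, by linarith [this]⟩
    rw [if_pos hcond]
    congr 1
    rw [thetaTerm, thetaTerm]
    congr 1
    have h2C : ((2:ℕ):ℂ) = 2 := by norm_num
    congr 1
    · congr 1
      refine Finset.sum_congr rfl fun i _ => ?_
      refine Finset.sum_congr rfl fun j _ => ?_
      simp only [Pi.zero_apply, Int.cast_zero, zero_div, add_zero, Matrix.smul_apply,
        smul_eq_mul]
      push_cast
      field_simp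
      rw [hhC]
      ring
    · congr 1
      refine Finset.sum_congr rfl fun i _ => ?_
      simp only [Pi.zero_apply, Int.cast_zero, zero_div, add_zero, zero_add, mul_zero]

end Aux

/-- second identity of Lemma 3 of the paper, with the
proportionality constant made explicit:
`∑_{u ∈ {0,…,2^ν p−1}^g} (−1)^{ε·u} θ_{2^ν p}[0, u](0, Ω/(2^ν p))
  = (2^ν p)^g · θ_2[ε,0](0, 2^ν p·Ω)`. -/
theorem lemma3_second_identity (g : ℕ) (hg : 1 ≤ g) (p : ℕ) (hp : Odd p) (hp0 : 0 < p)
    (ν : ℕ) (hν : 1 ≤ ν) (ε : Fin g → ℤ) (hε : ∀ i, ε i = 0 ∨ ε i = 1)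
    (Ω : Matrix (Fin g) (Fin g) ℂ) (hΩ : IsSiegel Ω) :
    ∑ u : Fin g → Fin (2 ^ ν * p),
      (-1 : ℂ) ^ (∑ i, ε i * ((u i : ℕ) : ℤ)) *
        thetaChar g (2 ^ ν * p) 0 (fun i => ((u i : ℕ) : ℤ)) 0
          ((1 / ((2 ^ ν * p : ℕ) : ℂ)) • Ω)
    = ((2 ^ ν * p : ℕ) : ℂ) ^ g *
        thetaChar g 2 ε 0 0 ((((2 ^ ν * p : ℕ) : ℂ)) • Ω) := by
  classical
  set L : ℕ := 2 ^ ν * p with hLdef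
  have hL : 0 < L := by positivity
  have hLh : L = 2 * (2 ^ (ν - 1) * p) := by
    rw [hLdef, ← mul_assoc]
    congr 1
    rw [← pow_succ']
    congr 1
    omega
  set h : ℕ := 2 ^ (ν - 1) * p with hhdef
  have hsummable : ∀ u : Fin g → Fin L, Summable (fun n : Fin g → ℤ =>
      (-1:ℂ) ^ (∑ i, ε i * ((u i : ℕ) : ℤ)) *
        thetaTerm g L 0 (fun i => ((u i : ℕ) : ℤ)) 0 ((1/(L:ℂ)) • Ω) n) := fun u =>
    (summable_thetaTerm g hg L hL _ Ω hΩ).mul_left _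
  calc ∑ u : Fin g → Fin L,
      (-1 : ℂ) ^ (∑ i, ε i * ((u i : ℕ) : ℤ)) *
        thetaChar g L 0 (fun i => ((u i : ℕ) : ℤ)) 0 ((1 / ((L : ℕ) : ℂ)) • Ω)
      = ∑ u : Fin g → Fin L, ∑' n : Fin g → ℤ,
          (-1 : ℂ) ^ (∑ i, ε i * ((u i : ℕ) : ℤ)) *
            thetaTerm g L 0 (fun i => ((u i : ℕ) : ℤ)) 0 ((1/(L:ℂ)) • Ω) n := by
        refine Finset.sum_congr rfl fun u _ => ?_
        rw [thetaChar, tsum_mul_left]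
    _ = ∑' n : Fin g → ℤ, ∑ u : Fin g → Fin L,
          (-1 : ℂ) ^ (∑ i, ε i * ((u i : ℕ) : ℤ)) *
            thetaTerm g L 0 (fun i => ((u i : ℕ) : ℤ)) 0 ((1/(L:ℂ)) • Ω) n :=
        (Summable.tsum_finsetSum (fun u _ => hsummable u)).symm
    _ = ∑' n : Fin g → ℤ, ((if ∀ i, (L:ℤ) ∣ (n i + h * ε i) then ((L:ℂ) ^ g) else 0) *
          thetaTerm g L 0 0 0 ((1/(L:ℂ)) • Ω) n) :=
        tsum_congr (fun n => pointwise g L h hL hLh ε _ n)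
    _ = ∑' m : Fin g → ℤ, (L:ℂ) ^ g * thetaTerm g 2 ε 0 0 ((L:ℂ) • Ω) m :=
        reindex g L h hL hLh ε Ω
    _ = ((L : ℕ) : ℂ) ^ g * thetaChar g 2 ε 0 0 (((L : ℕ) : ℂ) • Ω) := by
        rw [thetaChar, tsum_mul_left]
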